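/- Let V ∈ P({1,...,n}) be a pair partition and σ a cyclic permutation of {1,...,n} (say σ(i) = i+1 mod n). Then the relabeled pairing σ(V) is again a pair partition, and the integral ∫···∫ f_n(x_n)···f_1(x_1) Q_V^n(x) δ_V^n(x) dx is mapped bijectively to the corresponding integral for the cyclically shifted functions. Consequently Σ_{V ∈ P(S)} ∫ f_n(x_n)···f_1(x_1) Q_V^n(x) δ_V^n(x) dx = Σ_{V ∈ P(S)} ∫ f_1(x_1) f_n(x_n)···f_2(x_2) Q_V^n(x) δ_V^n(x) dx. -/

import Mathlib

open MeasureTheory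
open scoped Classical

noncomputable section

/-- A vector in the algebraic Fock space over functions on `ℝ^j`, given by its sequence of
`n`-particle wave functions. -/
def FockFun (j : ℕ) : Type :=
  (n : ℕ) → ((Fin n → EuclideanSpace ℝ (Fin j)) → ℝ)

/-- The `Q`-deformed creation operator (at the level of functions): `a⁺(h) f = h ⊗ f`. -/
def crOp (j : ℕ) (h : EuclideanSpace ℝ (Fin j) → ℝ) (F : FockFun j) : FockFun j :=
  fun n =>
    match n with
    | 0 => fun _ => 0
    | m + 1 => fun x => h (x 0) * F m (x ∘ Fin.succ)

/-- The `Q`-deformed annihilation operator (at the level of functions):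
`(a(h) F)ₙ (x₁,…,xₙ) = ∫_U h(y) Σ_{k=0}^{n} (Π_{m<k} Q(y,x_m)) Fₙ₊₁(x₁,…,x_k,y,x_{k+1},…,xₙ) dy`,
which is `l(h) R_Q^{(n+1)}` in the notation of the paper. -/
def anOp (j : ℕ) (U : Set (EuclideanSpace ℝ (Fin j)))
    (Q : EuclideanSpace ℝ (Fin j) → EuclideanSpace ℝ (Fin j) → ℝ)
    (h : EuclideanSpace ℝ (Fin j) → ℝ) (F : FockFun j) : FockFun j :=
  fun n x =>
    ∫ y in U, h y * ∑ k : Fin (n + 1),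
      (∏ m ∈ Finset.univ.filter (fun m : Fin n => (m : ℕ) < (k : ℕ)), Q y (x m)) *
        F (n + 1) (Fin.insertNth k y x)

/-- The vacuum vector `Ω`. -/
def vac (j : ℕ) : FockFun j := fun n _ => if n = 0 then 1 else 0

/-- The vacuum expectation `⟨F, Ω⟩_Q`, i.e. the `0`-particle component of `F`. -/
def vacExp (j : ℕ) (F : FockFun j) : ℝ := F 0 (fun i => i.elim0)

/-- `V` is a pair partition of `{0, …, n-1}`: every pair `(a, z) ∈ V` has `a < z`, and every
element belongs to exactly one pair. -/
def IsPairing (n : ℕ) (V : Finset (Fin n × Fin n)) : Prop :=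
  (∀ p ∈ V, p.1 < p.2) ∧
    ∀ k : Fin n, ∃! p : Fin n × Fin n, p ∈ V ∧ (p.1 = k ∨ p.2 = k)

/-- The set of crossings of a pairing: pairs of pairs `(a,z), (a',z')` with
`a < a' < z < z'`. -/
def crossings (n : ℕ) (V : Finset (Fin n × Fin n)) :
    Finset ((Fin n × Fin n) × (Fin n × Fin n)) :=
  (V ×ˢ V).filter (fun c => c.1.1 < c.2.1 ∧ c.2.1 < c.1.2 ∧ c.1.2 < c.2.2)

/-- The value `∫⋯∫ f_n(x_n)⋯f_1(x_1) Q_V^n(x) δ_V^n(x) dx₁⋯dxₙ` attached to a pairing `V`: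
the Dirac deltas identify the two variables of each pair, leaving one integration variable
per pair, the functions of the two legs of each pair are evaluated at that variable, and each
crossing contributes a factor of `Q`. -/
def pairingIntegral (j n : ℕ) (U : Set (EuclideanSpace ℝ (Fin j)))
    (Q : EuclideanSpace ℝ (Fin j) → EuclideanSpace ℝ (Fin j) → ℝ)
    (f : Fin n → (EuclideanSpace ℝ (Fin j) → ℝ))
    (V : Finset (Fin n × Fin n)) : ℝ :=
  ∫ x : {p // p ∈ V} → EuclideanSpace ℝ (Fin j) in {x | ∀ p, x p ∈ U},
    (∏ p : {p // p ∈ V}, f p.1.1 (x p) * f p.1.2 (x p)) *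
      ∏ c ∈ (crossings n V).attach,
        Q (x ⟨c.1.1, (Finset.mem_product.mp (Finset.mem_filter.mp c.2).1).1⟩)
          (x ⟨c.1.2, (Finset.mem_product.mp (Finset.mem_filter.mp c.2).1).2⟩)


/-- Cyclic relabeling of a pair: shift both legs by `1 (mod n)` and reorder so that the
smaller index comes first. -/
def rotatePair (n : ℕ) (p : Fin n × Fin n) : Fin n × Fin n :=
  let a := finRotate n p.1
  let z := finRotate n p.2
  if a ≤ z then (a, z) else (z, a)

/-!
A pairing is a set of chords of a circle with `n` marked points, and the `Q`-weight of a
pairing only records which chords cross. A rotation of the circle keeps chords crossing,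
although it may change which of two crossing chords starts first; as `Q` is symmetric this
does not change the weights. So relabelling a pairing `V` by the rotation `σ` and renaming the
integration variables along `V ≃ σ(V)` turns the integral for `f` over `σ(V)` into the integral
for `f ∘ σ` over `V`, and summing over `V` gives the claim because `V ↦ σ(V)` permutes the
pairings.
-/

section Relabel

variable {n : ℕ}

def relabelPair (σ : Equiv.Perm (Fin n)) (p : Fin n × Fin n) : Fin n × Fin n :=
  if σ p.1 ≤ σ p.2 then (σ p.1, σ p.2) else (σ p.2, σ p.1)

lemma rotatePair_eq_relabelPair : rotatePair n = relabelPair (finRotate n) := rfl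

lemma relabelPair_eq_or (σ : Equiv.Perm (Fin n)) (p : Fin n × Fin n) :
    relabelPair σ p = (σ p.1, σ p.2) ∨ relabelPair σ p = (σ p.2, σ p.1) := by
  unfold relabelPair
  split_ifs
  exacts [Or.inl rfl, Or.inr rfl]

lemma relabelPair_lt (σ : Equiv.Perm (Fin n)) {p : Fin n × Fin n} (h : p.1 ≠ p.2) :
    (relabelPair σ p).1 < (relabelPair σ p).2 := by
  have hne : σ p.1 ≠ σ p.2 := σ.injective.ne h
  unfold relabelPair
  split_ifs with hle
  exacts [lt_of_le_of_ne hle hne, lt_of_not_ge hle]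

lemma relabelPair_symm_relabelPair (σ : Equiv.Perm (Fin n)) {p : Fin n × Fin n}
    (h : p.1 < p.2) : relabelPair σ.symm (relabelPair σ p) = p := by
  rcases relabelPair_eq_or σ p with hp | hp <;>
    (rw [hp, relabelPair]; simp [h.le, not_le.mpr h])

lemma relabelPair_relabelPair_symm (σ : Equiv.Perm (Fin n)) {p : Fin n × Fin n}
    (h : p.1 < p.2) : relabelPair σ (relabelPair σ.symm p) = p := by
  simpa using relabelPair_symm_relabelPair σ.symm h

lemma relabelPair_fst_eq_or_snd_eq_iff (σ : Equiv.Perm (Fin n)) (p : Fin n × Fin n)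
    (k : Fin n) :
    ((relabelPair σ p).1 = k ∨ (relabelPair σ p).2 = k) ↔ (p.1 = σ.symm k ∨ p.2 = σ.symm k) := by
  simp only [Equiv.eq_symm_apply]
  rcases relabelPair_eq_or σ p with hp | hp <;> simp only [hp, or_comm]

lemma IsPairing.image_relabelPair {V : Finset (Fin n × Fin n)} (hV : IsPairing n V)
    (σ : Equiv.Perm (Fin n)) : IsPairing n (V.image (relabelPair σ)) := by
  refine ⟨?_, fun k => ?_⟩
  · simp only [Finset.forall_mem_image]
    exact fun p hp => relabelPair_lt σ (hV.1 p hp).ne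
  · obtain ⟨p, ⟨hpV, hpk⟩, huniq⟩ := hV.2 (σ.symm k)
    refine ⟨relabelPair σ p, ⟨Finset.mem_image_of_mem _ hpV,
      (relabelPair_fst_eq_or_snd_eq_iff σ p k).mpr hpk⟩, ?_⟩
    rintro _ ⟨hq, hqk⟩
    obtain ⟨q, hqV, rfl⟩ := Finset.mem_image.mp hq
    rw [huniq q ⟨hqV, (relabelPair_fst_eq_or_snd_eq_iff σ q k).mp hqk⟩]

lemma relabelPair_symm_mem {V : Finset (Fin n × Fin n)} (hV : ∀ p ∈ V, p.1 < p.2)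
    (σ : Equiv.Perm (Fin n)) {q : Fin n × Fin n} (hq : q ∈ V.image (relabelPair σ)) :
    relabelPair σ.symm q ∈ V := by
  obtain ⟨p, hp, rfl⟩ := Finset.mem_image.mp hq
  rwa [relabelPair_symm_relabelPair σ (hV p hp)]

lemma image_relabelPair_symm_image {V : Finset (Fin n × Fin n)} (hV : ∀ p ∈ V, p.1 < p.2)
    (σ : Equiv.Perm (Fin n)) : (V.image (relabelPair σ)).image (relabelPair σ.symm) = V := by
  rw [Finset.image_image]
  exact (Finset.image_congr fun p hp => relabelPair_symm_relabelPair σ (hV p hp)).trans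
    Finset.image_id

lemma sum_pairings_image_relabelPair {M : Type*} [AddCommMonoid M] (σ : Equiv.Perm (Fin n))
    (g : Finset (Fin n × Fin n) → M) :
    ∑ V ∈ Finset.univ.filter (fun V => IsPairing n V), g (V.image (relabelPair σ)) =
      ∑ V ∈ Finset.univ.filter (fun V => IsPairing n V), g V := by
  have hmem : ∀ τ : Equiv.Perm (Fin n), ∀ V ∈ Finset.univ.filter (fun V => IsPairing n V),
      V.image (relabelPair τ) ∈ Finset.univ.filter (fun V => IsPairing n V) := by
    simp only [Finset.mem_filter, Finset.mem_univ, true_and]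
    exact fun τ V hV => hV.image_relabelPair τ
  refine Finset.sum_nbij' (·.image (relabelPair σ)) (·.image (relabelPair σ.symm))
    (hmem σ) (hmem σ.symm) (fun V hV => ?_) (fun V hV => ?_) fun _ _ => rfl
  · exact image_relabelPair_symm_image (Finset.mem_filter.mp hV).2.1 σ
  · simpa using image_relabelPair_symm_image (Finset.mem_filter.mp hV).2.1 σ.symm

end Relabel

section Crossing

variable {n : ℕ}

def Crosses (p q : Fin n × Fin n) : Prop :=
  p.1 < q.1 ∧ q.1 < p.2 ∧ p.2 < q.2

def Interleaved (p q : Fin n × Fin n) : Prop :=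
  Crosses p q ∨ Crosses q p

lemma Crosses.fst_lt {p q : Fin n × Fin n} (h : Crosses p q) : p.1 < p.2 :=
  h.1.trans h.2.1

lemma Crosses.snd_lt {p q : Fin n × Fin n} (h : Crosses p q) : q.1 < q.2 :=
  h.2.1.trans h.2.2

lemma Crosses.not_crosses_swap {p q : Fin n × Fin n} (h : Crosses p q) : ¬Crosses q p :=
  fun h' => lt_asymm h.1 h'.1

lemma mem_crossings {V : Finset (Fin n × Fin n)} {c : (Fin n × Fin n) × (Fin n × Fin n)} :
    c ∈ crossings n V ↔ c.1 ∈ V ∧ c.2 ∈ V ∧ Crosses c.1 c.2 := by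
  simp [crossings, Crosses, and_assoc]

def orientCrossing (p q : Fin n × Fin n) : (Fin n × Fin n) × (Fin n × Fin n) :=
  if Crosses p q then (p, q) else (q, p)

lemma orientCrossing_eq_or (p q : Fin n × Fin n) :
    orientCrossing p q = (p, q) ∨ orientCrossing p q = (q, p) := by
  unfold orientCrossing
  split_ifs
  exacts [Or.inl rfl, Or.inr rfl]

lemma orientCrossing_of_crosses {p q : Fin n × Fin n} (h : Crosses p q) :
    orientCrossing p q = (p, q) :=
  if_pos h

lemma orientCrossing_of_crosses_swap {p q : Fin n × Fin n} (h : Crosses q p) :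
    orientCrossing p q = (q, p) :=
  if_neg h.not_crosses_swap

lemma orientCrossing_mem_crossings {V : Finset (Fin n × Fin n)} {p q : Fin n × Fin n}
    (hp : p ∈ V) (hq : q ∈ V) (h : Interleaved p q) : orientCrossing p q ∈ crossings n V := by
  rcases h with h | h
  · rw [orientCrossing_of_crosses h]
    exact mem_crossings.mpr ⟨hp, hq, h⟩
  · rw [orientCrossing_of_crosses_swap h]
    exact mem_crossings.mpr ⟨hq, hp, h⟩

def relabelCrossing (σ : Equiv.Perm (Fin n)) (c : (Fin n × Fin n) × (Fin n × Fin n)) :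
    (Fin n × Fin n) × (Fin n × Fin n) :=
  orientCrossing (relabelPair σ c.1) (relabelPair σ c.2)

lemma relabelCrossing_symm_relabelCrossing (σ : Equiv.Perm (Fin n))
    {c : (Fin n × Fin n) × (Fin n × Fin n)} (h : Crosses c.1 c.2) :
    relabelCrossing σ.symm (relabelCrossing σ c) = c := by
  have h1 := relabelPair_symm_relabelPair σ h.fst_lt
  have h2 := relabelPair_symm_relabelPair σ h.snd_lt
  rcases orientCrossing_eq_or (relabelPair σ c.1) (relabelPair σ c.2) with hc | hc <;>
    simp only [relabelCrossing, hc, h1, h2]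
  exacts [orientCrossing_of_crosses h, orientCrossing_of_crosses_swap h]

def PreservesInterleaving (σ : Equiv.Perm (Fin n)) : Prop :=
  ∀ p q : Fin n × Fin n, p.1 < p.2 → q.1 < q.2 →
    (Interleaved (relabelPair σ p) (relabelPair σ q) ↔ Interleaved p q)

lemma prod_crossings_image_relabelPair {α M : Type*} [CommMonoid M] (Q : α → α → M)
    (hQs : ∀ x y, Q x y = Q y x) {σ : Equiv.Perm (Fin n)} (hσ : PreservesInterleaving σ)
    {V : Finset (Fin n × Fin n)} (hV : ∀ p ∈ V, p.1 < p.2) (w : Fin n × Fin n → α) :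
    ∏ c ∈ crossings n V, Q (w (relabelPair σ c.1)) (w (relabelPair σ c.2)) =
      ∏ c ∈ crossings n (V.image (relabelPair σ)), Q (w c.1) (w c.2) := by
  refine Finset.prod_nbij' (relabelCrossing σ) (relabelCrossing σ.symm) (fun c hc => ?_)
    (fun c hc => ?_) (fun c hc => ?_) (fun c hc => ?_) (fun c _ => ?_)
  · obtain ⟨h1, h2, hc⟩ := mem_crossings.mp hc
    exact orientCrossing_mem_crossings (Finset.mem_image_of_mem _ h1)
      (Finset.mem_image_of_mem _ h2) ((hσ _ _ hc.fst_lt hc.snd_lt).mpr (Or.inl hc))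
  · obtain ⟨h1, h2, hc⟩ := mem_crossings.mp hc
    refine orientCrossing_mem_crossings (relabelPair_symm_mem hV σ h1)
      (relabelPair_symm_mem hV σ h2) ((hσ _ _ ?_ ?_).mp ?_)
    · exact relabelPair_lt σ.symm hc.fst_lt.ne
    · exact relabelPair_lt σ.symm hc.snd_lt.ne
    · rw [relabelPair_relabelPair_symm σ hc.fst_lt, relabelPair_relabelPair_symm σ hc.snd_lt]
      exact Or.inl hc
  · exact relabelCrossing_symm_relabelCrossing σ (mem_crossings.mp hc).2.2
  · simpa using relabelCrossing_symm_relabelCrossing σ.symm (mem_crossings.mp hc).2.2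
  · rcases orientCrossing_eq_or (relabelPair σ c.1) (relabelPair σ c.2) with h | h <;>
      simp only [relabelCrossing, h]
    exact hQs _ _

end Crossing

section Rotation

lemma val_finRotate {n : ℕ} (i : Fin n) :
    (finRotate n i : ℕ) = if (i : ℕ) + 1 = n then 0 else (i : ℕ) + 1 := by
  cases n with
  | zero => exact i.elim0
  | succ m => rw [coe_finRotate]; simp [Fin.ext_iff]

lemma val_rotatePair {n : ℕ} {p : Fin n × Fin n} (h : p.1 < p.2) :
    ((p.2 : ℕ) + 1 = n ∧ ((rotatePair n p).1 : ℕ) = 0 ∧ ((rotatePair n p).2 : ℕ) = p.1 + 1) ∨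
      ((p.2 : ℕ) + 1 < n ∧ ((rotatePair n p).1 : ℕ) = p.1 + 1 ∧
        ((rotatePair n p).2 : ℕ) = p.2 + 1) := by
  have ha := val_finRotate p.1
  have hz := val_finRotate p.2
  have hlt : (p.1 : ℕ) < p.2 := h
  have hz_lt := p.2.isLt
  simp only [rotatePair_eq_relabelPair, relabelPair, Fin.le_def]
  split_ifs at ha hz ⊢ <;> (dsimp only; omega)

lemma finRotate_preservesInterleaving (n : ℕ) : PreservesInterleaving (finRotate n) := by
  intro p q hp hq
  rw [← rotatePair_eq_relabelPair]
  have hp' := val_rotatePair hp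
  have hq' := val_rotatePair hq
  simp only [Interleaved, Crosses, Fin.lt_def] at hp hq ⊢
  omega

end Rotation

section Integral

variable {n : ℕ}

def relabelPairEquiv (σ : Equiv.Perm (Fin n)) {V : Finset (Fin n × Fin n)}
    (hV : ∀ p ∈ V, p.1 < p.2) : {p // p ∈ V} ≃ {q // q ∈ V.image (relabelPair σ)} where
  toFun p := ⟨relabelPair σ p, Finset.mem_image_of_mem _ p.2⟩
  invFun q := ⟨relabelPair σ.symm q, relabelPair_symm_mem hV σ q.2⟩
  left_inv p := Subtype.ext (relabelPair_symm_relabelPair σ (hV _ p.2))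
  right_inv q := by
    obtain ⟨p, hp, hq⟩ := Finset.mem_image.mp q.2
    exact Subtype.ext (relabelPair_relabelPair_symm σ (hq ▸ relabelPair_lt σ (hV p hp).ne))

lemma prod_attach_crossings {α M : Type*} [CommMonoid M] (Q : α → α → M)
    (V : Finset (Fin n × Fin n)) (x : {p // p ∈ V} → α) (w : Fin n × Fin n → α)
    (hw : ∀ p (hp : p ∈ V), x ⟨p, hp⟩ = w p) :
    ∏ c ∈ (crossings n V).attach,
        Q (x ⟨c.1.1, (mem_crossings.mp c.2).1⟩) (x ⟨c.1.2, (mem_crossings.mp c.2).2.1⟩) =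
      ∏ c ∈ crossings n V, Q (w c.1) (w c.2) := by
  rw [← Finset.prod_attach (crossings n V)]
  exact Finset.prod_congr rfl fun c _ => by rw [hw, hw]

lemma pairingIntegral_image_relabelPair (j : ℕ) (U : Set (EuclideanSpace ℝ (Fin j)))
    (Q : EuclideanSpace ℝ (Fin j) → EuclideanSpace ℝ (Fin j) → ℝ)
    (hQs : ∀ x y, Q x y = Q y x) (f : Fin n → (EuclideanSpace ℝ (Fin j) → ℝ))
    {σ : Equiv.Perm (Fin n)} (hσ : PreservesInterleaving σ)
    {V : Finset (Fin n × Fin n)} (hV : ∀ p ∈ V, p.1 < p.2) :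
    pairingIntegral j n U Q f (V.image (relabelPair σ)) =
      pairingIntegral j n U Q (fun i => f (σ i)) V := by
  set e := relabelPairEquiv σ hV
  let φ := MeasurableEquiv.piCongrLeft (fun _ => EuclideanSpace ℝ (Fin j)) e
  have hφ : ∀ x p, φ x (e p) = x p := fun x p =>
    MeasurableEquiv.piCongrLeft_apply_apply (β := fun _ => EuclideanSpace ℝ (Fin j)) e x p
  have hset : φ ⁻¹' {y | ∀ q, y q ∈ U} = {x | ∀ p, x p ∈ U} := by
    ext x
    simp only [Set.mem_preimage, Set.mem_ofPred_eq, ← e.forall_congr_right (q := (φ x · ∈ U)),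
      hφ]
  rw [pairingIntegral, pairingIntegral, ← hset,
    ← (volume_measurePreserving_piCongrLeft _ e).setIntegral_preimage_emb
      φ.measurableEmbedding]
  congr 1 with x
  congr 1
  · rw [← e.prod_comp]
    refine Finset.prod_congr rfl fun p _ => ?_
    rw [hφ]
    rcases relabelPair_eq_or σ p.1 with h | h <;> simp only [e, relabelPairEquiv,
      Equiv.coe_fn_mk, h]
    exact mul_comm _ _
  · let w : Fin n × Fin n → EuclideanSpace ℝ (Fin j) := fun q =>
      if hq : q ∈ V.image (relabelPair σ) then φ x ⟨q, hq⟩ else 0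
    rw [prod_attach_crossings Q _ (φ x) w fun q hq => (dif_pos hq : w q = _).symm,
      prod_attach_crossings Q V x (fun p => w (relabelPair σ p)) fun p hp => ?_,
      prod_crossings_image_relabelPair Q hQs hσ hV w]
    simp only [w, dif_pos (Finset.mem_image_of_mem _ hp)]
    exact (hφ x ⟨p, hp⟩).symm

end Integral

theorem pairing_sum_cyclic_invariant_general
    (j n : ℕ) (U : Set (EuclideanSpace ℝ (Fin j)))
    (Q : EuclideanSpace ℝ (Fin j) → EuclideanSpace ℝ (Fin j) → ℝ)
    (hQs : ∀ x y, Q x y = Q y x)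
    (f : Fin n → (EuclideanSpace ℝ (Fin j) → ℝ)) :
    (∀ V : Finset (Fin n × Fin n), IsPairing n V →
      IsPairing n (V.image (rotatePair n))) ∧
    ∑ V ∈ Finset.univ.filter (fun V => IsPairing n V), pairingIntegral j n U Q f V =
      ∑ V ∈ Finset.univ.filter (fun V => IsPairing n V),
        pairingIntegral j n U Q (fun i => f (finRotate n i)) V := by
  rw [rotatePair_eq_relabelPair]
  refine ⟨fun V hV => hV.image_relabelPair _, ?_⟩
  rw [← sum_pairings_image_relabelPair (finRotate n)]
  refine Finset.sum_congr rfl fun V hV => ?_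
  exact pairingIntegral_image_relabelPair j U Q hQs f (finRotate_preservesInterleaving n)
    (Finset.mem_filter.mp hV).2.1

/-- Cyclic invariance of the pair-partition sums (the combinatorial heart of traciality):
for the cyclic permutation `σ(i) = i + 1 (mod n)`, the relabeled pairing `σ(V)` of a pair
partition `V` is again a pair partition, and
the total pairing sum `Σ_{V ∈ P(S)} ∫ f_n(x_n)⋯f_1(x_1) Q_V^n(x) δ_V^n(x) dx`
for `f` equals the corresponding sum for the cyclically shifted family
`f ∘ σ` (which realizes `Σ_V ∫ f_1(x_1) f_n(x_n) ⋯ f_2(x_2) …`). -/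
theorem pairing_sum_cyclic_invariant
    (j n : ℕ) (U : Set (EuclideanSpace ℝ (Fin j))) (hU : IsOpen U) (hUne : U.Nonempty)
    (Q : EuclideanSpace ℝ (Fin j) → EuclideanSpace ℝ (Fin j) → ℝ)
    (hQm : Measurable (fun p : EuclideanSpace ℝ (Fin j) × EuclideanSpace ℝ (Fin j) =>
      Q p.1 p.2))
    (hQbd : ∃ c : ℝ, ∀ x y, |Q x y| ≤ c)
    (hQs : ∀ x y, Q x y = Q y x)
    (f : Fin n → (EuclideanSpace ℝ (Fin j) → ℝ))
    (hfc : ∀ i, Continuous (f i)) (hfs : ∀ i, HasCompactSupport (f i))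
    (hfU : ∀ i, Function.support (f i) ⊆ U) :
    (∀ V : Finset (Fin n × Fin n), IsPairing n V →
      IsPairing n (V.image (rotatePair n))) ∧
    ∑ V ∈ Finset.univ.filter (fun V => IsPairing n V), pairingIntegral j n U Q f V =
      ∑ V ∈ Finset.univ.filter (fun V => IsPairing n V),
        pairingIntegral j n U Q (fun i => f (finRotate n i)) V :=
  pairing_sum_cyclic_invariant_general j n U Q hQs f
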